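/- arXiv:2111.02296 — 8 statements merged into one kernel-verified Lean document; each statement's English description precedes it below -/
import Mathlib

section
/- Let G = (V, E) be a finite nonempty DAG and let c ≥ 2 be a real number. Then the weighting function ρ : V → ℝ defined by ρ(v) = (c·|V|)^(depth(G) − level(v)) is c-admissible; that is, for every v ∈ V, (c·|V|)^(depth(G) − level(v)) ≥ 1 + c · Σ_{w ∈ Γ(v)} (c·|V|)^(depth(G) − level(w)). -/
open scoped Classical

/-- `level E v`: the number of edges in a longest directed path (w.r.t. edge
relation `E`) ending at `v`.  In a finite DAG every directed path has fewer
than `Fintype.card V` edges, so it suffices to take the supremum over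
`k < Fintype.card V` of those `k` for which a directed path with `k` edges
ending at `v` exists. -/
noncomputable def level {V : Type*} [Fintype V] (E : V → V → Prop) (v : V) : ℕ :=
  ((Finset.range (Fintype.card V)).filter (fun k => ∃ f : Fin (k + 1) → V,
      f (Fin.last k) = v ∧ ∀ i : Fin k, E (f i.castSucc) (f i.succ))).sup id

/-- `depth E`: the maximum level of any vertex. -/
noncomputable def depth {V : Type*} [Fintype V] (E : V → V → Prop) : ℕ :=
  Finset.univ.sup (fun v => level E v)

/-!
The level strictly increases along every edge: a longest path to `v` followed by an edge
`v → w` is a path to `w`, and acyclicity makes it injective, so it is short enough to count in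
the definition of `level E w`. Hence a child `w` of `v` has weight at most `(c n)^(e - 1)`, where
`e = depth - level v` and `n = |V|`, and `v` has at most `n - 1` children, so
`1 + c Σ ρ(w) ≤ (1 + c (n - 1)) (c n)^(e - 1) ≤ c n (c n)^(e - 1) = ρ(v)`.
-/

section DirectedPath

variable {V : Type*} (E : V → V → Prop)

def IsDirectedPath {k : ℕ} (f : Fin (k + 1) → V) : Prop :=
  ∀ i : Fin k, E (f i.castSucc) (f i.succ)

variable {E}

theorem IsDirectedPath.snoc {k : ℕ} {f : Fin (k + 1) → V} (hf : IsDirectedPath E f) {w : V}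
    (hw : E (f (Fin.last k)) w) : IsDirectedPath E (Fin.snoc f w : Fin (k + 2) → V) := by
  intro i
  induction i using Fin.lastCases with
  | last => rw [Fin.succ_last, Fin.snoc_castSucc]; simpa only [Fin.snoc_last] using hw
  | cast j => rw [Fin.succ_castSucc, Fin.snoc_castSucc, Fin.snoc_castSucc]; exact hf j

theorem IsDirectedPath.transGen {k : ℕ} {f : Fin (k + 1) → V} (hf : IsDirectedPath E f)
    {i j : Fin (k + 1)} (hij : i < j) : Relation.TransGen E (f i) (f j) := by
  induction j using Fin.induction with
  | zero => exact absurd hij (Fin.not_lt_zero i)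
  | succ j ih =>
    rcases (Fin.le_castSucc_iff.mpr hij).lt_or_eq with hlt | rfl
    · exact (ih hlt).tail (hf j)
    · exact .single (hf j)

theorem IsDirectedPath.injective {k : ℕ} {f : Fin (k + 1) → V} (hf : IsDirectedPath E f)
    (hacyc : ∀ v, ¬ Relation.TransGen E v v) : Function.Injective f := by
  intro i j hij
  by_contra hne
  rcases lt_or_gt_of_ne hne with h | h
  · exact hacyc _ (hij ▸ hf.transGen h)
  · exact hacyc _ (hij ▸ hf.transGen h)

end DirectedPath

section Level

variable {V : Type*} [Fintype V] {E : V → V → Prop}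

theorem mem_level_candidates {v : V} {k : ℕ} (hk : k < Fintype.card V) {f : Fin (k + 1) → V}
    (hlast : f (Fin.last k) = v) (hf : IsDirectedPath E f) :
    k ∈ (Finset.range (Fintype.card V)).filter (fun k => ∃ f : Fin (k + 1) → V,
      f (Fin.last k) = v ∧ ∀ i : Fin k, E (f i.castSucc) (f i.succ)) :=
  Finset.mem_filter.mpr ⟨Finset.mem_range.mpr hk, f, hlast, hf⟩

theorem exists_isDirectedPath_level (v : V) :
    ∃ f : Fin (level E v + 1) → V, f (Fin.last _) = v ∧ IsDirectedPath E f := by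
  have hpos : 0 < Fintype.card V := Fintype.card_pos_iff.mpr ⟨v⟩
  have hzero := mem_level_candidates (E := E) hpos (f := fun _ => v) rfl (fun i => i.elim0)
  obtain ⟨k, hk, hlevel⟩ := Finset.exists_mem_eq_sup _ ⟨0, hzero⟩ id
  rw [level, hlevel]
  exact (Finset.mem_filter.mp hk).2

theorem level_lt_of_rel (hacyc : ∀ v, ¬ Relation.TransGen E v v) {v w : V} (hvw : E v w) :
    level E v < level E w := by
  obtain ⟨f, hlast, hf⟩ := exists_isDirectedPath_level (E := E) v
  have hg : IsDirectedPath E (Fin.snoc f w : Fin (level E v + 2) → V) := hf.snoc (by rwa [hlast])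
  have hcard : level E v + 1 < Fintype.card V := by
    simpa using Fintype.card_le_of_injective _ (hg.injective hacyc)
  exact Finset.le_sup (f := id) (mem_level_candidates hcard (Fin.snoc_last _ _) hg)

theorem level_le_depth (v : V) : level E v ≤ depth E :=
  Finset.le_sup (Finset.mem_univ v)

end Level

theorem pow_sub_rank_admissible {V : Type*} [Fintype V] (E : V → V → Prop) (r : V → ℕ) (d : ℕ)
    (hr : ∀ {v w}, E v w → r v < r w) (hd : ∀ v, r v ≤ d) {c : ℝ} (hc : 1 ≤ c) (v : V) :
    1 + c * ∑ w ∈ Finset.univ.filter (fun w => E v w), (c * (Fintype.card V : ℝ)) ^ (d - r w)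
      ≤ (c * (Fintype.card V : ℝ)) ^ (d - r v) := by
  set n := Fintype.card V
  set x := c * (n : ℝ)
  set children := Finset.univ.filter (fun w => E v w)
  have hn : (1 : ℝ) ≤ n := by exact_mod_cast Fintype.card_pos_iff.mpr ⟨v⟩
  have hx : 1 ≤ x := by nlinarith
  have hchildren : children.card + 1 ≤ n :=
    Finset.card_lt_univ_of_notMem (x := v) (by simpa [children] using fun h => (hr h).false)
  rcases children.eq_empty_or_nonempty with hempty | ⟨w₀, hw₀⟩
  · simpa [hempty] using one_le_pow₀ hx
  have hv : r v < d := (hr (Finset.mem_filter.mp hw₀).2).trans_le (hd w₀)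
  set X := x ^ (d - r v - 1)
  have hX : 1 ≤ X := one_le_pow₀ hx
  have hsum : ∑ w ∈ children, x ^ (d - r w) ≤ children.card * X := by
    rw [← nsmul_eq_mul]
    refine Finset.sum_le_card_nsmul _ _ _ fun w hw => pow_le_pow_right₀ hx ?_
    have := hr (Finset.mem_filter.mp hw).2
    omega
  have hcard : (children.card : ℝ) + 1 ≤ n := by exact_mod_cast hchildren
  calc 1 + c * ∑ w ∈ children, x ^ (d - r w)
      ≤ X + c * (children.card * X) := by gcongr
    _ ≤ c * ((children.card + 1) * X) := by nlinarith
    _ ≤ c * (n * X) := by gcongr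
    _ = x ^ (d - r v) := by rw [← mul_assoc, ← pow_succ']; congr 1; omega

theorem stmt0_general {V : Type*} [Fintype V] (E : V → V → Prop)
    (hacyc : ∀ v : V, ¬ Relation.TransGen E v v)
    (c : ℝ) (hc : 2 ≤ c) (v : V) :
    (c * (Fintype.card V : ℝ)) ^ (depth E - level E v)
      ≥ 1 + c * ∑ w ∈ Finset.univ.filter (fun w => E v w),
          (c * (Fintype.card V : ℝ)) ^ (depth E - level E w) :=
  pow_sub_rank_admissible E (level E) (depth E) (level_lt_of_rel hacyc) level_le_depth
    (by linarith) v

/-- In a finite nonempty DAG, for any real `c ≥ 2`, the weighting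
function `ρ(v) = (c·|V|)^(depth(G) − level(v))` is `c`-admissible. -/
theorem stmt0 {V : Type*} [Fintype V] [Nonempty V] (E : V → V → Prop)
    (hacyc : ∀ v : V, ¬ Relation.TransGen E v v)
    (c : ℝ) (hc : 2 ≤ c) (v : V) :
    (c * (Fintype.card V : ℝ)) ^ (depth E - level E v)
      ≥ 1 + c * ∑ w ∈ Finset.univ.filter (fun w => E v w),
          (c * (Fintype.card V : ℝ)) ^ (depth E - level E w) :=
  stmt0_general E hacyc c hc v
end

section
/- Let G = (V, E) be a finite DAG and let c ≥ 2 be a real number. Then the weighting function ω : V → ℝ defined by ω(v) = (c+1)^|Desc(v)| is c-admissible; that is, for every v ∈ V, (c+1)^|Desc(v)| ≥ 1 + c · Σ_{w ∈ Γ(v)} (c+1)^|Desc(w)|. -/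
/-!
Choose a child `w` of `v` that is not a descendant of any other child. Its descendants lie in
`Desc(v) \ {w}`, so with `n = |Desc(v)|` we get
`c · (c+1)^|Desc(w)| ≤ c · (c+1)^(n-1) = (c+1)^n - (c+1)^(n-1)`.
Removing `w` both from the children and from `Desc(v)` keeps the remaining children and their
descendants inside the smaller set, so induction telescopes these bounds. The invariant is
`c · Σ_{w ∈ S} (c+1)^|Desc(w)| + (c+1)^|T \ S| ≤ (c+1)^|T|` for any set `S` of vertices which,
together with their descendants, lie in `T`.
-/

open scoped Classical

/-- `descSet E v`: the set of descendants of `v`, i.e. vertices reachable from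
`v` by a directed path of length ≥ 1 (in a DAG these are automatically ≠ `v`). -/
noncomputable def descSet {V : Type*} [Fintype V] (E : V → V → Prop) (v : V) : Finset V :=
  Finset.univ.filter (fun u => Relation.TransGen E v u)

section descSet

variable {V : Type*} [Fintype V] {E : V → V → Prop}

theorem mem_descSet {v u : V} : u ∈ descSet E v ↔ Relation.TransGen E v u := by
  simp [descSet]

theorem not_mem_descSet_self (hacyc : ∀ v : V, ¬ Relation.TransGen E v v) (v : V) :
    v ∉ descSet E v :=
  fun h => hacyc v (mem_descSet.mp h)

theorem mem_descSet_of_rel {v w : V} (h : E v w) : w ∈ descSet E v :=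
  mem_descSet.mpr (.single h)

theorem descSet_subset_of_rel {v w : V} (h : E v w) : descSet E w ⊆ descSet E v :=
  fun _ hu => mem_descSet.mpr ((Relation.TransGen.single h).trans (mem_descSet.mp hu))

theorem exists_mem_forall_not_mem_descSet (hacyc : ∀ v : V, ¬ Relation.TransGen E v v)
    {S : Finset V} (hS : S.Nonempty) : ∃ w ∈ S, ∀ x ∈ S, w ∉ descSet E x := by
  have : IsTrans V (Relation.TransGen E) := ⟨fun _ _ _ => .trans⟩
  have : Std.Irrefl (Relation.TransGen E) := ⟨hacyc⟩
  obtain ⟨w, hwS, hmin⟩ :=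
    (Finite.wellFounded_of_trans_of_irrefl (Relation.TransGen E)).has_min (S : Set V) hS
  exact ⟨w, hwS, fun x hx hw => hmin x hx (mem_descSet.mp hw)⟩

theorem mul_sum_pow_card_descSet_add_pow_card_sdiff_le
    (hacyc : ∀ v : V, ¬ Relation.TransGen E v v) {c : ℝ} (hc : 0 ≤ c) (S T : Finset V)
    (hST : S ⊆ T) (hdesc : ∀ w ∈ S, descSet E w ⊆ T) :
    c * ∑ w ∈ S, (c + 1) ^ (descSet E w).card + (c + 1) ^ (T \ S).card
      ≤ (c + 1) ^ T.card := by
  induction S using Finset.strongInduction generalizing T with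
  | H S ih =>
  rcases S.eq_empty_or_nonempty with rfl | hne
  · simp
  obtain ⟨w, hwS, hw⟩ := exists_mem_forall_not_mem_descSet hacyc hne
  have hrest := ih (S.erase w) (Finset.erase_ssubset hwS) (T.erase w)
    (Finset.erase_subset_erase w hST) fun x hx u hu =>
      Finset.mem_erase.mpr ⟨fun huw => hw x (Finset.mem_of_mem_erase hx) (huw ▸ hu),
        hdesc x (Finset.mem_of_mem_erase hx) hu⟩
  have hsdiff : T.erase w \ S.erase w = T \ S := by
    ext u
    by_cases huw : u = w <;> simp [huw, hwS]
  have hdesc_w : (descSet E w).card ≤ (T.erase w).card :=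
    Finset.card_le_card fun u hu =>
      Finset.mem_erase.mpr
        ⟨fun huw => not_mem_descSet_self hacyc w (huw ▸ hu), hdesc w hwS hu⟩
  calc c * ∑ x ∈ S, (c + 1) ^ (descSet E x).card + (c + 1) ^ (T \ S).card
      = c * (c + 1) ^ (descSet E w).card + (c * ∑ x ∈ S.erase w, (c + 1) ^ (descSet E x).card
          + (c + 1) ^ (T.erase w \ S.erase w).card) := by
        rw [← Finset.add_sum_erase S _ hwS, hsdiff]
        ring
    _ ≤ c * (c + 1) ^ (T.erase w).card + (c + 1) ^ (T.erase w).card := by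
        gcongr
        linarith
    _ = (c + 1) ^ T.card := by
        rw [← Finset.card_erase_add_one (hST hwS), pow_succ]
        ring

end descSet

/-- In a finite DAG, for any real `c ≥ 2`, the weighting function
`ω(v) = (c+1)^|Desc(v)|` is `c`-admissible. -/
theorem stmt1 {V : Type*} [Fintype V] (E : V → V → Prop)
    (hacyc : ∀ v : V, ¬ Relation.TransGen E v v)
    (c : ℝ) (hc : 2 ≤ c) (v : V) :
    (c + 1) ^ (descSet E v).card
      ≥ 1 + c * ∑ w ∈ Finset.univ.filter (fun w => E v w),
          (c + 1) ^ (descSet E w).card := by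
  have hchildren := mul_sum_pow_card_descSet_add_pow_card_sdiff_le hacyc
    (by linarith : (0 : ℝ) ≤ c) (Finset.univ.filter (fun w => E v w)) (descSet E v)
    (fun w hw => mem_descSet_of_rel (Finset.mem_filter.mp hw).2)
    (fun w hw => descSet_subset_of_rel (Finset.mem_filter.mp hw).2)
  have hone : (1 : ℝ) ≤ (c + 1) ^ (descSet E v \ Finset.univ.filter (fun w => E v w)).card :=
    one_le_pow₀ (by linarith)
  linarith
end

section
/- Let G = (V, E) be a finite nonempty DAG, let c ≥ 0 be a real number, and let f : V → ℝ be a c-admissible weighting function. Then the total weight satisfies W_f(G) = Σ_{v ∈ V} f(v) ≥ c^depth(G). -/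
open scoped Classical

theorem one_le_f {V : Type*} [Fintype V] (E : V → V → Prop)
    (hacyc : ∀ v : V, ¬ Relation.TransGen E v v)
    (c : ℝ) (hc : 0 ≤ c) (f : V → ℝ)
    (hf : ∀ v : V, f v ≥ 1 + c * ∑ w ∈ Finset.univ.filter (fun w => E v w), f w) :
    ∀ v : V, 1 ≤ f v := by
  have hirr : IsIrrefl V (Relation.TransGen (flip E)) := by
    constructor
    intro v h
    exact hacyc v ((Relation.transGen_swap).1 h)
  have htwf : WellFounded (Relation.TransGen (flip E)) :=
    Finite.wellFounded_of_trans_of_irrefl _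
  have hwf : WellFounded (flip E) :=
    Subrelation.wf (fun h => Relation.TransGen.single h) htwf
  intro v
  induction v using hwf.induction with
  | _ v ih =>
    have hsum : 0 ≤ ∑ w ∈ Finset.univ.filter (fun w => E v w), f w := by
      apply Finset.sum_nonneg
      intro w hw
      have hEw : E v w := (Finset.mem_filter.1 hw).2
      have := ih w hEw
      linarith
    have := hf v
    nlinarith

theorem path_ge {V : Type*} [Fintype V] (E : V → V → Prop)
    (hacyc : ∀ v : V, ¬ Relation.TransGen E v v)
    (c : ℝ) (hc : 0 ≤ c) (f : V → ℝ)
    (hf : ∀ v : V, f v ≥ 1 + c * ∑ w ∈ Finset.univ.filter (fun w => E v w), f w) :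
    ∀ (k : ℕ) (g : Fin (k + 1) → V),
      (∀ i : Fin k, E (g i.castSucc) (g i.succ)) → c ^ k ≤ f (g 0) := by
  have h1 := one_le_f E hacyc c hc f hf
  intro k
  induction k with
  | zero =>
    intro g _
    simpa using h1 (g 0)
  | succ k ih =>
    intro g hg
    have hstep : c ^ k ≤ f (g (0 : Fin (k + 1)).succ) := by
      have := ih (fun i => g i.succ) (fun i => by
        have := hg i.succ
        simpa only [Fin.succ_castSucc] using this)
      simpa using this
    have hE : E (g 0) (g (0 : Fin (k + 1)).succ) := by
      have := hg 0
      simpa using this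
    have hmem : g (0 : Fin (k + 1)).succ ∈
        Finset.univ.filter (fun w => E (g 0) w) := by
      simp only [Finset.mem_filter, Finset.mem_univ, true_and]
      exact hE
    have hsum : f (g (0 : Fin (k + 1)).succ) ≤
        ∑ w ∈ Finset.univ.filter (fun w => E (g 0) w), f w := by
      apply Finset.single_le_sum (f := f) _ hmem
      intro w hw
      have := h1 w
      linarith
    have := hf (g 0)
    have hck : 0 ≤ c ^ k := pow_nonneg hc k
    calc c ^ (k + 1) = c * c ^ k := by ring
      _ ≤ c * f (g (0 : Fin (k+1)).succ) := by
          apply mul_le_mul_of_nonneg_left hstep hc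
      _ ≤ c * ∑ w ∈ Finset.univ.filter (fun w => E (g 0) w), f w :=
          mul_le_mul_of_nonneg_left hsum hc
      _ ≤ f (g 0) := by linarith

/-- In a finite nonempty DAG, for any real `c ≥ 0` and any
`c`-admissible weighting function `f`, the total weight satisfies
`W_f(G) = Σ_v f(v) ≥ c^depth(G)`. -/
theorem stmt4 {V : Type*} [Fintype V] [Nonempty V] (E : V → V → Prop)
    (hacyc : ∀ v : V, ¬ Relation.TransGen E v v)
    (c : ℝ) (hc : 0 ≤ c) (f : V → ℝ)
    (hf : ∀ v : V, f v ≥ 1 + c * ∑ w ∈ Finset.univ.filter (fun w => E v w), f w) :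
    ∑ v : V, f v ≥ c ^ depth E := by
  have h1 := one_le_f E hacyc c hc f hf
  -- find vertex achieving depth
  obtain ⟨v, _, hv⟩ := Finset.exists_mem_eq_sup Finset.univ
    Finset.univ_nonempty (fun v => level E v)
  -- the filter set for v is nonempty (k = 0 works)
  set s := (Finset.range (Fintype.card V)).filter (fun k => ∃ g : Fin (k + 1) → V,
      g (Fin.last k) = v ∧ ∀ i : Fin k, E (g i.castSucc) (g i.succ)) with hs
  have hsne : s.Nonempty := by
    refine ⟨0, ?_⟩
    simp only [hs, Finset.mem_filter, Finset.mem_range]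
    refine ⟨Fintype.card_pos, fun _ => v, rfl, fun i => i.elim0⟩
  obtain ⟨k, hk, hksup⟩ := Finset.exists_mem_eq_sup s hsne id
  have hklevel : level E v = k := hksup
  obtain ⟨-, g, -, hpath⟩ := Finset.mem_filter.1 hk
  have hge := path_ge E hacyc c hc f hf k g hpath
  have hdepth : depth E = k := by rw [depth, hv]; exact hklevel
  rw [hdepth]
  calc c ^ k ≤ f (g 0) := hge
    _ ≤ ∑ u : V, f u := by
        apply Finset.single_le_sum (f := f) _ (Finset.mem_univ _)
        intro w _
        have := h1 w
        linarith
end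

section
/- Let G = (V, E) be a finite DAG, let c ≥ 0 be a real number, and let f : V → ℝ be a c-admissible weighting function. Let v₁ ≠ v₂ be two vertices with identical in-neighborhoods: for every u ∈ V, (u, v₁) ∈ E if and only if (u, v₂) ∈ E. Define the merged graph G' on V' := V \ {v₂} with edge relation E' given, for a, b ∈ V', by: (a, b) ∈ E' iff (a, b) ∈ E or (a = v₁ and (v₂, b) ∈ E). Define f' : V' → ℝ by f'(v₁) := f(v₁) + f(v₂) and f'(v) := f(v) for v ≠ v₁. Then G' is a DAG (E' has no directed cycles and is irreflexive), f' is a c-admissible weighting function for G', and Σ_{v ∈ V'} f'(v) = Σ_{v ∈ V} f(v). -/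
open scoped Classical

/-!
A path in the merged graph lifts to a path in `G`, possibly starting at `v₂` instead of `v₁`:
since `v₁` and `v₂` have the same in-neighbours, every path into `v₁` can be rerouted into `v₂`.
So a cycle in the merged graph yields one in `G`. At the merged vertex the children are the
union of the children of `v₁` and `v₂`, whose weight is at most the sum of the two (weights are
at least `1` by well-founded induction), and adding the two admissibility inequalities leaves a
spare `1`. Any other vertex has `v₁` as a child exactly when it has `v₂`, so its out-sum is
unchanged.
-/

open Finset Relation

section Admissible

variable {V : Type*} [Fintype V] {E : V → V → Prop} {c : ℝ} {f : V → ℝ}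

lemma wellFounded_flip_of_transGen_irrefl (hacyc : ∀ v, ¬ TransGen E v v) :
    WellFounded (flip E) :=
  have : IsTrans V (flip (TransGen E)) := ⟨fun _ _ _ h₁ h₂ => h₂.trans h₁⟩
  have : Std.Irrefl (flip (TransGen E)) := ⟨hacyc⟩
  Subrelation.wf (r := flip (TransGen E)) (fun h => .single h)
    (Finite.wellFounded_of_trans_of_irrefl _)

lemma one_le_of_admissible (hwf : WellFounded (flip E)) (hc : 0 ≤ c)
    (hf : ∀ v, f v ≥ 1 + c * ∑ w ∈ univ.filter (E v), f w) (v : V) : 1 ≤ f v := by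
  induction v using hwf.induction with
  | _ v ih =>
    have hsum : 0 ≤ ∑ w ∈ univ.filter (E v), f w :=
      sum_nonneg fun w hw => zero_le_one.trans (ih w (mem_filter.mp hw).2)
    nlinarith [hf v, mul_nonneg hc hsum]

end Admissible

lemma Finset.sum_filter_or_le {ι M : Type*} [AddCommMonoid M] [PartialOrder M]
    [IsOrderedAddMonoid M] {s : Finset ι} {g : ι → M} (hg : ∀ i ∈ s, 0 ≤ g i)
    (p q : ι → Prop) :
    ∑ i ∈ s.filter (fun i => p i ∨ q i), g i
      ≤ ∑ i ∈ s.filter p, g i + ∑ i ∈ s.filter q, g i := by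
  rw [filter_or, ← sum_union_inter]
  exact le_add_of_nonneg_right
    (sum_nonneg fun i hi => hg i (mem_of_mem_filter i (mem_inter.mp hi).1))

section Merge

variable {V : Type*} (E : V → V → Prop) (f : V → ℝ) (v₁ v₂ : V)

abbrev mergeRel (a b : {v : V // v ≠ v₂}) : Prop :=
  E a.1 b.1 ∨ (a.1 = v₁ ∧ E v₂ b.1)

noncomputable def mergeWeight (v : {v : V // v ≠ v₂}) : ℝ :=
  if v.1 = v₁ then f v₁ + f v₂ else f v.1

variable {E v₁ v₂}

lemma transGen_of_transGen_of_forall_iff (hin : ∀ u, E u v₁ ↔ E u v₂) {u : V}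
    (h : TransGen E u v₁) : TransGen E u v₂ := by
  obtain ⟨w, huw, hw⟩ := TransGen.tail'_iff.mp h
  exact TransGen.tail' huw ((hin w).mp hw)

lemma transGen_of_transGen_mergeRel (hin : ∀ u, E u v₁ ↔ E u v₂)
    {a b : {v : V // v ≠ v₂}}
    (h : TransGen (mergeRel E v₁ v₂) a b) :
    TransGen E a.1 b.1 ∨ (a.1 = v₁ ∧ TransGen E v₂ b.1) := by
  induction h with
  | single h =>
    rcases h with h | ⟨ha, h⟩
    · exact .inl (.single h)
    · exact .inr ⟨ha, .single h⟩
  | tail _ hbc ih =>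
    rcases hbc with h | ⟨rfl, h⟩
    · exact ih.imp (·.tail h) (And.imp_right (·.tail h))
    · exact ih.imp (transGen_of_transGen_of_forall_iff hin · |>.tail h)
        (And.imp_right (transGen_of_transGen_of_forall_iff hin · |>.tail h))

lemma not_transGen_mergeRel_self (hacyc : ∀ v, ¬ TransGen E v v)
    (hin : ∀ u, E u v₁ ↔ E u v₂) (a : {v : V // v ≠ v₂}) :
    ¬ TransGen (mergeRel E v₁ v₂) a a := fun h =>
  match transGen_of_transGen_mergeRel hin h with
  | .inl h => hacyc a.1 h
  | .inr ⟨ha, h⟩ => hacyc v₂ (transGen_of_transGen_of_forall_iff hin (ha ▸ h))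

variable [Fintype V] {f}

lemma sum_filter_mergeWeight (hne : v₁ ≠ v₂) (p : V → Prop) [DecidablePred p]
    (q : {v : V // v ≠ v₂} → Prop) [DecidablePred q] (hq : ∀ w, q w ↔ p w.1)
    (hp : p v₁ ↔ p v₂) :
    ∑ w ∈ univ.filter q, mergeWeight f v₁ v₂ w = ∑ w ∈ univ.filter p, f w := by
  have hpoint : ∀ w : {v : V // v ≠ v₂},
      (if q w then mergeWeight f v₁ v₂ w else 0)
        = (if p w.1 then f w.1 else 0)
          + if w = ⟨v₁, hne⟩ then (if p v₂ then f v₂ else 0) else 0 := by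
    rintro ⟨w, hw⟩
    by_cases h : w = v₁
    · subst h; simp [mergeWeight, hq, ← hp, ite_add_ite]
    · simp [mergeWeight, hq, h]
  rw [sum_filter, sum_filter, Fintype.sum_eq_add_sum_subtype_ne _ v₂]
  simp only [hpoint, sum_add_distrib, sum_ite_eq', mem_univ, if_true]
  ring

variable {c : ℝ}

lemma mergeWeight_admissible (hacyc : ∀ v, ¬ TransGen E v v) (hc : 0 ≤ c)
    (hf : ∀ v, f v ≥ 1 + c * ∑ w ∈ univ.filter (E v), f w) (hne : v₁ ≠ v₂)
    (hin : ∀ u, E u v₁ ↔ E u v₂) (v : {v : V // v ≠ v₂}) :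
    mergeWeight f v₁ v₂ v
      ≥ 1 + c * ∑ w ∈ univ.filter (fun w => mergeRel E v₁ v₂ v w),
        mergeWeight f v₁ v₂ w := by
  have hirr : ∀ v, ¬ E v v := fun v h => hacyc v (.single h)
  by_cases hv : v.1 = v₁
  · have hp : E v₁ v₁ ∨ E v₂ v₁ ↔ E v₁ v₂ ∨ E v₂ v₂ := by
      rw [← hin v₁, hin v₂]
    have hunion := sum_filter_or_le (s := univ)
      (fun w _ => zero_le_one.trans
        (one_le_of_admissible (wellFounded_flip_of_transGen_irrefl hacyc) hc hf w))
      (E v₁) (E v₂)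
    rw [sum_filter_mergeWeight hne (fun w => E v₁ w ∨ E v₂ w) _
      (by simp [mergeRel, hv]) hp]
    simp only [mergeWeight, hv, if_true]
    nlinarith [hf v₁, hf v₂, mul_nonneg hc (sub_nonneg.mpr hunion)]
  · rw [sum_filter_mergeWeight hne (E v.1) _ (by simp [mergeRel, hv]) (hin v.1)]
    simpa only [mergeWeight, hv, if_false] using hf v.1

lemma sum_mergeWeight (hne : v₁ ≠ v₂) :
    ∑ v : {v : V // v ≠ v₂}, mergeWeight f v₁ v₂ v = ∑ v, f v := by
  simpa using
    sum_filter_mergeWeight (f := f) hne (fun _ => True) (fun _ => True) (fun _ => .rfl) .rfl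

end Merge

/-- Merging two vertices `v₁ ≠ v₂` with identical in-neighborhoods.
The merged graph is on the subtype `{v // v ≠ v₂}`, with edge relation
`E' a b ↔ E a b ∨ (a = v₁ ∧ E v₂ b)`, and merged weighting function
`f'(v₁) = f(v₁) + f(v₂)`, `f'(v) = f(v)` otherwise.  Then the merged graph is a
DAG (its edge relation has an irreflexive transitive closure), `f'` is
`c`-admissible for it, and the total weight is preserved. -/
theorem stmt5 {V : Type*} [Fintype V] (E : V → V → Prop)
    (hacyc : ∀ v : V, ¬ Relation.TransGen E v v)
    (c : ℝ) (hc : 0 ≤ c) (f : V → ℝ)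
    (hf : ∀ v : V, f v ≥ 1 + c * ∑ w ∈ Finset.univ.filter (fun w => E v w), f w)
    (v₁ v₂ : V) (hne : v₁ ≠ v₂)
    (hin : ∀ u : V, E u v₁ ↔ E u v₂) :
    (∀ a : {v : V // v ≠ v₂},
      ¬ Relation.TransGen
          (fun a b : {v : V // v ≠ v₂} => E a.1 b.1 ∨ (a.1 = v₁ ∧ E v₂ b.1)) a a) ∧
    (∀ v : {v : V // v ≠ v₂},
      (if v.1 = v₁ then f v₁ + f v₂ else f v.1)
        ≥ 1 + c * ∑ w ∈ Finset.univ.filter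
            (fun w : {v : V // v ≠ v₂} => E v.1 w.1 ∨ (v.1 = v₁ ∧ E v₂ w.1)),
            (if w.1 = v₁ then f v₁ + f v₂ else f w.1)) ∧
    (∑ v : {v : V // v ≠ v₂}, (if v.1 = v₁ then f v₁ + f v₂ else f v.1)
      = ∑ v : V, f v) :=
  ⟨not_transGen_mergeRel_self hacyc hin, mergeWeight_admissible hacyc hc hf hne hin,
    sum_mergeWeight hne⟩
end

section
/- With the query-graph setup of the context, let f : {1, …, N} → ℝ be an η⁻¹-admissible weighting function, and let (x, p) be a valid pair with t(x, p) > T − η. Then x is a correct query string, i.e., for every i: if x_i = 1 then z_i(x) ∉ N_i, and if x_i = 0 then z_i(x) ∉ Y_i. -/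
/-!
If `x` were wrong at `i`, flip `x_i` (taking `p_i := m_i(z_i(x))` when switching it on) and set
`p_j := 0` at every successor `j` of `i`. The flip gains at least `f(i) η` at `i`, resetting the
successors loses at most `∑_{i ∈ pred j} f(j)`, and admissibility makes the net gain at least `η`,
so the new valid pair would exceed `T`.
-/

open Finset

namespace QueryGraph

variable {N : ℕ} {pred : Fin N → Finset (Fin N)}

def solutionWeight (f : Fin N → ℝ) (γ : ℝ) (x : Fin N → Bool) (p : Fin N → ℝ) : ℝ :=
  ∑ i, f i * (if x i then p i else γ)

def solutionWeights (f : Fin N → ℝ) (γ : ℝ)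
    (m : (i : Fin N) → ({j : Fin N // j ∈ pred i} → Bool) → ℝ) : Set ℝ :=
  {r | ∃ (x : Fin N → Bool) (p : Fin N → ℝ), (∀ i, 0 ≤ p i ∧ p i ≤ 1) ∧
    (∀ i, p i ≤ m i (fun j => x j.1)) ∧ r = solutionWeight f γ x p}

def resetAt (pred : Fin N → Finset (Fin N)) (p : Fin N → ℝ) (i : Fin N) (q : ℝ) : Fin N → ℝ :=
  Function.update (fun j => if i ∈ pred j then 0 else p j) i q

theorem one_le_of_admissible (hpred : ∀ i, ∀ j ∈ pred i, j < i) {f : Fin N → ℝ} {c : ℝ}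
    (hc : 0 ≤ c) (hf : ∀ i, 1 + c * ∑ j ∈ univ.filter (fun j => i ∈ pred j), f j ≤ f i) (i : Fin N) :
    1 ≤ f i := by
  induction i using WellFoundedGT.induction with
  | ind i ih =>
    have hsucc : 0 ≤ ∑ j ∈ univ.filter (fun j => i ∈ pred j), f j :=
      sum_nonneg fun j hj => zero_le_one.trans (ih j (hpred j i (mem_filter.1 hj).2))
    linarith [hf i, mul_nonneg hc hsucc]

theorem bddAbove_solutionWeights {f : Fin N → ℝ} (hf : ∀ i, 0 ≤ f i) {γ : ℝ} (hγ : γ ≤ 1)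
    (m : (i : Fin N) → ({j : Fin N // j ∈ pred i} → Bool) → ℝ) :
    BddAbove (solutionWeights f γ m) := by
  refine ⟨∑ i, f i, ?_⟩
  rintro _ ⟨x, p, hp, -, rfl⟩
  refine sum_le_sum fun i _ => mul_le_of_le_one_right (hf i) ?_
  split
  · exact (hp i).2
  · exact hγ

theorem restrict_update_of_not_mem (x : Fin N → Bool) {i j : Fin N} (b : Bool)
    (hij : i ∉ pred j) :
    (fun k : {k : Fin N // k ∈ pred j} => Function.update x i b k.1) = fun k => x k.1 := by
  funext k
  exact Function.update_of_ne (fun h : k.1 = i => hij (h ▸ k.2)) _ _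

theorem solutionWeight_update_mem_solutionWeights (hpred : ∀ i, ∀ j ∈ pred i, j < i)
    {m : (i : Fin N) → ({j : Fin N // j ∈ pred i} → Bool) → ℝ} (hm0 : ∀ i z, 0 ≤ m i z)
    (f : Fin N → ℝ) (γ : ℝ) {x : Fin N → Bool} {p : Fin N → ℝ}
    (hp : ∀ i, 0 ≤ p i ∧ p i ≤ 1) (hvalid : ∀ i, p i ≤ m i (fun j => x j.1))
    (i : Fin N) (b : Bool) {q : ℝ} (hq0 : 0 ≤ q) (hq1 : q ≤ 1)
    (hqm : q ≤ m i (fun j => x j.1)) :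
    solutionWeight f γ (Function.update x i b) (resetAt pred p i q) ∈ solutionWeights f γ m := by
  refine ⟨_, _, fun j => ?_, fun j => ?_, rfl⟩
  · by_cases hji : j = i
    · subst hji; simpa [resetAt] using ⟨hq0, hq1⟩
    · by_cases hij : i ∈ pred j <;> simp [resetAt, hji, hij, hp j]
  · by_cases hji : j = i
    · subst hji
      rw [restrict_update_of_not_mem x b fun h => lt_irrefl _ (hpred j j h)]
      simpa [resetAt] using hqm
    · by_cases hij : i ∈ pred j
      · simpa [resetAt, hji, hij] using hm0 j _
      · rw [restrict_update_of_not_mem x b hij]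
        simpa [resetAt, hji, hij] using hvalid j

theorem solutionWeight_update_ge {f : Fin N → ℝ} (hf : ∀ i, 0 ≤ f i) (γ : ℝ)
    (x : Fin N → Bool) {p : Fin N → ℝ} (hp1 : ∀ i, p i ≤ 1) (i : Fin N) (b : Bool) (q : ℝ) :
    solutionWeight f γ x p + f i * ((if b then q else γ) - (if x i then p i else γ))
        - ∑ j ∈ univ.filter (fun j => i ∈ pred j), f j
      ≤ solutionWeight f γ (Function.update x i b) (resetAt pred p i q) := by
  have hterm : ∀ j ∈ (univ : Finset (Fin N)),
      (if j = i then f i * ((if b then q else γ) - (if x i then p i else γ)) else 0)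
          - (if i ∈ pred j then f j else 0)
        ≤ f j * (if Function.update x i b j then resetAt pred p i q j else γ)
          - f j * (if x j then p j else γ) := by
    intro j _
    by_cases hji : j = i
    · subst hji
      have hself : 0 ≤ if j ∈ pred j then f j else 0 := by split <;> simp [hf j]
      simp only [resetAt, Function.update_self, if_true]
      linarith [mul_sub (f j) (if b then q else γ) (if x j then p j else γ)]
    · simp only [resetAt, Function.update_of_ne hji, if_neg hji]
      by_cases hij : i ∈ pred j
      · simp only [if_pos hij]
        cases x j
        · simp [hf j]
        · simp only [if_true]; linarith [mul_le_of_le_one_right (hf j) (hp1 j)]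
      · simp [hij]
  have hsum := sum_le_sum hterm
  rw [sum_sub_distrib, sum_sub_distrib, sum_ite_eq' univ i, ← sum_filter] at hsum
  unfold solutionWeight
  simp only [mem_univ, if_true] at hsum
  linarith

theorem gain_lt_of_near_optimal (hpred : ∀ i, ∀ j ∈ pred i, j < i) {η γ : ℝ} (hη : 0 < η)
    (hγ : γ ≤ 1) {m : (i : Fin N) → ({j : Fin N // j ∈ pred i} → Bool) → ℝ}
    (hm0 : ∀ i z, 0 ≤ m i z) {f : Fin N → ℝ}
    (hf : ∀ i, 1 + η⁻¹ * ∑ j ∈ univ.filter (fun j => i ∈ pred j), f j ≤ f i)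
    {x : Fin N → Bool} {p : Fin N → ℝ}
    (hp : ∀ i, 0 ≤ p i ∧ p i ≤ 1) (hvalid : ∀ i, p i ≤ m i (fun j => x j.1))
    (hT : solutionWeight f γ x p > sSup (solutionWeights f γ m) - η)
    (i : Fin N) (b : Bool) {q : ℝ} (hq0 : 0 ≤ q) (hq1 : q ≤ 1)
    (hqm : q ≤ m i (fun j => x j.1)) :
    (if b then q else γ) - (if x i then p i else γ) < η := by
  have hf0 : ∀ j, 0 ≤ f j := fun j =>
    zero_le_one.trans (one_le_of_admissible hpred (inv_nonneg.2 hη.le) hf j)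
  have hnew := le_csSup (bddAbove_solutionWeights hf0 hγ m)
    (solutionWeight_update_mem_solutionWeights hpred hm0 f γ hp hvalid i b hq0 hq1 hqm)
  have hchange := solutionWeight_update_ge (pred := pred) hf0 γ x (fun j => (hp j).2) i b q
  set S := ∑ j ∈ univ.filter (fun j => i ∈ pred j), f j
  have hadmissible : η + S ≤ f i * η := by
    have := mul_le_mul_of_nonneg_right (hf i) hη.le
    rwa [add_mul, one_mul, mul_comm η⁻¹, mul_assoc, inv_mul_cancel₀ hη.ne', mul_one] at this
  by_contra! hgain
  linarith [mul_le_mul_of_nonneg_left hgain (hf0 i)]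

end QueryGraph

open QueryGraph in
theorem stmt6_general (N : ℕ) (pred : Fin N → Finset (Fin N))
    (hpred : ∀ i : Fin N, ∀ j ∈ pred i, j < i)
    (α β : ℝ) (hβα : β < α) (hα : α ≤ 1)
    (m : (i : Fin N) → (({j : Fin N // j ∈ pred i} → Bool) → ℝ))
    (hm0 : ∀ i z, 0 ≤ m i z) (hm1 : ∀ i z, m i z ≤ 1)
    (Y Nn : (i : Fin N) → Set ({j : Fin N // j ∈ pred i} → Bool))
    (hY : ∀ i z, z ∈ Y i → α ≤ m i z)
    (hN : ∀ i z, z ∈ Nn i → m i z ≤ β)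
    (f : Fin N → ℝ)
    (hf : ∀ i : Fin N, f i ≥ 1 + ((α - β) / 2)⁻¹ *
        ∑ j ∈ Finset.univ.filter (fun j : Fin N => i ∈ pred j), f j)
    (x : Fin N → Bool) (p : Fin N → ℝ)
    (hp01 : ∀ i, 0 ≤ p i ∧ p i ≤ 1)
    (hvalid : ∀ i, p i ≤ m i (fun j => x j.1))
    (hT : ∑ i, f i * (if x i then p i else (α + β) / 2)
        > sSup {r : ℝ | ∃ (x' : Fin N → Bool) (p' : Fin N → ℝ),
              (∀ i, 0 ≤ p' i ∧ p' i ≤ 1) ∧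
              (∀ i, p' i ≤ m i (fun j => x' j.1)) ∧
              r = ∑ i, f i * (if x' i then p' i else (α + β) / 2)}
            - (α - β) / 2) :
    ∀ i : Fin N,
      (x i = true → (fun j : {j : Fin N // j ∈ pred i} => x j.1) ∉ Nn i) ∧
      (x i = false → (fun j : {j : Fin N // j ∈ pred i} => x j.1) ∉ Y i) := by
  intro i
  have gain_lt := gain_lt_of_near_optimal hpred (by linarith : 0 < (α - β) / 2)
    (by linarith : (α + β) / 2 ≤ 1) hm0 hf hp01 hvalid hT i
  constructor
  · intro hxi hNi
    have := gain_lt false le_rfl zero_le_one (hm0 i _)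
    simp only [hxi, if_true, Bool.false_eq_true, if_false] at this
    linarith [hvalid i, hN i _ hNi]
  · intro hxi hYi
    have := gain_lt true (hm0 i _) (hm1 i _) le_rfl
    simp only [hxi, if_true, Bool.false_eq_true, if_false] at this
    linarith [hY i _ hYi]

/-- With the query-graph setup (a DAG on `Fin N` in topological
order given by `pred`, completeness/soundness thresholds `β < α`,
`γ = (α+β)/2`, `η = (α−β)/2`, acceptance-probability functions `m i`, YES/NO
sets `Y i`/`Nn i`, an `η⁻¹`-admissible weighting function `f`, and the total
solution weight `t(x,p) = Σ_i f(i)·(x_i·p_i + (1−x_i)·γ)` over valid pairs with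
supremum `T`): if `(x, p)` is valid and `t(x,p) > T − η`, then `x` is a correct
query string, i.e. for every `i`, if `x_i = 1` then `z_i(x) ∉ N_i` and if
`x_i = 0` then `z_i(x) ∉ Y_i`.  Here `z_i(x) = x` restricted to `pred i`. -/
theorem stmt6 (N : ℕ) (pred : Fin N → Finset (Fin N))
    (hpred : ∀ i : Fin N, ∀ j ∈ pred i, j < i)
    (α β : ℝ) (hβ : 0 ≤ β) (hβα : β < α) (hα : α ≤ 1)
    (m : (i : Fin N) → (({j : Fin N // j ∈ pred i} → Bool) → ℝ))
    (hm0 : ∀ i z, 0 ≤ m i z) (hm1 : ∀ i z, m i z ≤ 1)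
    (Y Nn : (i : Fin N) → Set ({j : Fin N // j ∈ pred i} → Bool))
    (hYN : ∀ i, Disjoint (Y i) (Nn i))
    (hY : ∀ i z, z ∈ Y i → α ≤ m i z)
    (hN : ∀ i z, z ∈ Nn i → m i z ≤ β)
    (f : Fin N → ℝ)
    (hf : ∀ i : Fin N, f i ≥ 1 + ((α - β) / 2)⁻¹ *
        ∑ j ∈ Finset.univ.filter (fun j : Fin N => i ∈ pred j), f j)
    (x : Fin N → Bool) (p : Fin N → ℝ)
    (hp01 : ∀ i, 0 ≤ p i ∧ p i ≤ 1)
    (hvalid : ∀ i, p i ≤ m i (fun j => x j.1))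
    (hT : ∑ i, f i * (if x i then p i else (α + β) / 2)
        > sSup {r : ℝ | ∃ (x' : Fin N → Bool) (p' : Fin N → ℝ),
              (∀ i, 0 ≤ p' i ∧ p' i ≤ 1) ∧
              (∀ i, p' i ≤ m i (fun j => x' j.1)) ∧
              r = ∑ i, f i * (if x' i then p' i else (α + β) / 2)}
            - (α - β) / 2) :
    ∀ i : Fin N,
      (x i = true → (fun j : {j : Fin N // j ∈ pred i} => x j.1) ∉ Nn i) ∧
      (x i = false → (fun j : {j : Fin N // j ∈ pred i} => x j.1) ∉ Y i) :=
  stmt6_general N pred hpred α β hβα hα m hm0 hm1 Y Nn hY hN f hf x p hp01 hvalid hT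
end

section
/- Let n ∈ ℕ, let p ∈ MvPolynomial (Fin n) ℝ be multilinear, and let a ≤ b be real numbers. Then for every x : Fin n → ℝ with x(i) ∈ [a, b] for all i, there exists y : Fin n → ℝ with y(i) ∈ {a, b} for all i such that eval y p ≥ eval x p. In particular, the maximum of p over the box [a, b]^n is attained at a vertex of the box. -/
/-! A multilinear polynomial is affine in each variable separately, and an affine function on
`[a, b]` is maximised at an endpoint. Moving the coordinates of `x` to `a` or `b` one at a time,
each time to the endpoint where the value does not decrease, reaches a vertex of the box. -/

open MvPolynomial Set

section

variable {R σ : Type*}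

theorem add_mul_le_max_of_mem_Icc [Ring R] [LinearOrder R] [IsOrderedRing R]
    (c₀ c₁ : R) {a b t : R} (ht : t ∈ Icc a b) :
    c₀ + c₁ * t ≤ max (c₀ + c₁ * a) (c₀ + c₁ * b) := by
  rcases le_total 0 c₁ with hc | hc
  · exact le_max_of_le_right ((add_le_add_iff_left c₀).2 (mul_le_mul_of_nonneg_left ht.2 hc))
  · exact le_max_of_le_left ((add_le_add_iff_left c₀).2 (mul_le_mul_of_nonpos_left ht.1 hc))

variable [CommRing R] [DecidableEq σ]

theorem exists_polynomial_eval_eq_eval_update (p : MvPolynomial σ R) (x : σ → R) (i : σ) :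
    ∃ q : Polynomial R, q.natDegree ≤ p.degreeOf i ∧
      ∀ t, q.eval t = eval (Function.update x i t) p := by
  let e := Equiv.optionSubtypeNe i
  let xᵢ : {j // j ≠ i} → R := fun j ↦ x j
  refine ⟨(optionEquivLeft R _ (rename e.symm p)).map (eval xᵢ), ?_, fun t ↦ ?_⟩
  · exact Polynomial.natDegree_map_le.trans (degreeOf_eq_natDegree i p).ge
  · have hpoint : (fun o ↦ Option.elim o t xᵢ) = Function.update x i t ∘ e := by
      funext o
      rcases o with _ | ⟨j, hj⟩
      · simp [e]
      · simp [e, xᵢ, Function.update_of_ne hj]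
    rw [← optionEquivLeft_elim_eval, hpoint, ← eval_rename, rename_rename, e.self_comp_symm,
      rename_id_apply]

theorem exists_eval_update_eq_add_mul (p : MvPolynomial σ R) (x : σ → R) {i : σ}
    (hi : p.degreeOf i ≤ 1) :
    ∃ c₀ c₁ : R, ∀ t, eval (Function.update x i t) p = c₀ + c₁ * t := by
  obtain ⟨q, hq, hqeval⟩ := exists_polynomial_eval_eq_eval_update p x i
  refine ⟨q.coeff 0, q.coeff 1, fun t ↦ ?_⟩
  have hlin :=
    congrArg (Polynomial.eval t) (Polynomial.eq_X_add_C_of_natDegree_le_one (hq.trans hi))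
  simp only [Polynomial.eval_add, Polynomial.eval_mul, Polynomial.eval_C, Polynomial.eval_X] at hlin
  rw [← hqeval, hlin, add_comm, mul_comm]

end

section

variable {R σ : Type*} [CommRing R] [LinearOrder R] [IsOrderedRing R] [DecidableEq σ]

theorem exists_eval_le_eval_update_endpoint (p : MvPolynomial σ R) {i : σ}
    (hi : p.degreeOf i ≤ 1) {a b : R} {x : σ → R} (hx : x i ∈ Icc a b) :
    ∃ e, (e = a ∨ e = b) ∧ eval x p ≤ eval (Function.update x i e) p := by
  obtain ⟨c₀, c₁, hc⟩ := exists_eval_update_eq_add_mul p x hi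
  have hmax := add_mul_le_max_of_mem_Icc c₀ c₁ hx
  rw [← hc (x i), ← hc a, ← hc b, Function.update_eq_self] at hmax
  rcases le_max_iff.mp hmax with ha | hb
  · exact ⟨a, .inl rfl, ha⟩
  · exact ⟨b, .inr rfl, hb⟩

theorem exists_vertex_eval_le_of_forall_notMem (p : MvPolynomial σ R)
    (hp : ∀ i, p.degreeOf i ≤ 1) {a b : R} (s : Finset σ) :
    ∀ x : σ → R, (∀ i ∈ s, x i ∈ Icc a b) → (∀ i ∉ s, x i = a ∨ x i = b) →
      ∃ y : σ → R, (∀ i, y i = a ∨ y i = b) ∧ eval x p ≤ eval y p := by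
  induction s using Finset.induction_on with
  | empty => exact fun x _ hvert ↦ ⟨x, fun i ↦ hvert i (Finset.notMem_empty i), le_rfl⟩
  | insert i s his ih =>
    intro x hbox hvert
    obtain ⟨e, he, hle⟩ :=
      exists_eval_le_eval_update_endpoint p (hp i) (hbox i (Finset.mem_insert_self i s))
    have hbox' : ∀ j ∈ s, Function.update x i e j ∈ Icc a b := fun j hj ↦ by
      rw [Function.update_of_ne (ne_of_mem_of_not_mem hj his)]
      exact hbox j (Finset.mem_insert_of_mem hj)
    have hvert' : ∀ j ∉ s, Function.update x i e j = a ∨ Function.update x i e j = b := by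
      intro j hj
      rcases eq_or_ne j i with rfl | hji
      · simpa using he
      · rw [Function.update_of_ne hji]
        exact hvert j (by simp [hji, hj])
    obtain ⟨y, hy, hley⟩ := ih _ hbox' hvert'
    exact ⟨y, hy, hle.trans hley⟩

theorem exists_vertex_eval_le [Fintype σ] (p : MvPolynomial σ R) (hp : ∀ i, p.degreeOf i ≤ 1)
    {a b : R} {x : σ → R} (hx : ∀ i, x i ∈ Icc a b) :
    ∃ y : σ → R, (∀ i, y i = a ∨ y i = b) ∧ eval x p ≤ eval y p :=
  exists_vertex_eval_le_of_forall_notMem p hp Finset.univ x (fun i _ ↦ hx i)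
    (fun i hi ↦ absurd (Finset.mem_univ i) hi)

end

theorem stmt8_general (n : ℕ) (p : MvPolynomial (Fin n) ℝ)
    (hp : ∀ i : Fin n, p.degreeOf i ≤ 1)
    (a b : ℝ)
    (x : Fin n → ℝ) (hx : ∀ i, x i ∈ Set.Icc a b) :
    ∃ y : Fin n → ℝ, (∀ i, y i = a ∨ y i = b) ∧
      MvPolynomial.eval x p ≤ MvPolynomial.eval y p :=
  exists_vertex_eval_le p hp hx

/-- A multilinear polynomial over the box `[a,b]^n` is maximized
at a vertex of the box: for every `x ∈ [a,b]^n` there is a vertex `y` (each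
coordinate equal to `a` or `b`) with `eval y p ≥ eval x p`. -/
theorem stmt8 (n : ℕ) (p : MvPolynomial (Fin n) ℝ)
    (hp : ∀ i : Fin n, p.degreeOf i ≤ 1)
    (a b : ℝ) (hab : a ≤ b)
    (x : Fin n → ℝ) (hx : ∀ i, x i ∈ Set.Icc a b) :
    ∃ y : Fin n → ℝ, (∀ i, y i = a ∨ y i = b) ∧
      MvPolynomial.eval x p ≤ MvPolynomial.eval y p :=
  stmt8_general n p hp a b x hx
end

section
/- Let n ∈ ℕ, let p ∈ MvPolynomial (Fin n) ℝ be multilinear, and let W ≥ 0 be a real number. If 0 ≤ eval y p ≤ W for every y : Fin n → ℝ with y(i) ∈ {0, 1} for all i, then 0 ≤ eval x p ≤ W for every x : Fin n → ℝ with x(i) ∈ [0, 1] for all i. -/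
/-!
A multilinear polynomial is affine in each coordinate, so its value at a point of the box is a
convex combination of its values at the two points obtained by setting one coordinate to `0` or
`1`. Rounding the coordinates one at a time shows that every value on the box lies in any convex
set containing all values at Boolean points.
-/

open MvPolynomial Function Set

lemma prod_update_pow {M σ : Type*} [CommMonoid M] [Fintype σ] [DecidableEq σ]
    (x : σ → M) (i : σ) (t : M) (d : σ → ℕ) :
    ∏ j, update x i t j ^ d j = t ^ d i * ∏ j ∈ Finset.univ.erase i, x j ^ d j := by
  rw [← Finset.mul_prod_erase _ _ (Finset.mem_univ i), update_self]
  congr 1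
  exact Finset.prod_congr rfl fun j hj => by rw [update_of_ne (Finset.ne_of_mem_erase hj)]

lemma eval_update_of_degreeOf_le_one {R σ : Type*} [CommRing R] [Fintype σ] [DecidableEq σ]
    {p : MvPolynomial σ R} {i : σ} (hp : p.degreeOf i ≤ 1)
    (x : σ → R) (t : R) :
    eval (update x i t) p = (1 - t) * eval (update x i 0) p + t * eval (update x i 1) p := by
  simp only [eval_eq', Finset.mul_sum, ← Finset.sum_add_distrib, prod_update_pow]
  refine Finset.sum_congr rfl fun d hd => ?_
  have hdi : d i ≤ 1 := (monomial_le_degreeOf i hd).trans hp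
  interval_cases d i <;> ring

theorem eval_mem_of_forall_boolean {𝕜 σ : Type*} [Field 𝕜] [LinearOrder 𝕜]
    [IsStrictOrderedRing 𝕜] [Fintype σ] [DecidableEq σ] {p : MvPolynomial σ 𝕜}
    (hp : ∀ i, p.degreeOf i ≤ 1) {S : Set 𝕜} (hS : Convex 𝕜 S)
    (hbool : ∀ y : σ → 𝕜, (∀ i, y i = 0 ∨ y i = 1) → eval y p ∈ S)
    {x : σ → 𝕜} (hx : ∀ i, x i ∈ Icc 0 1) : eval x p ∈ S := by
  suffices h : ∀ s : Finset σ, ∀ x : σ → 𝕜, (∀ i, x i ∈ Icc 0 1) →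
      (∀ i ∉ s, x i = 0 ∨ x i = 1) → eval x p ∈ S from
    h Finset.univ x hx fun i hi => absurd (Finset.mem_univ i) hi
  intro s
  induction s using Finset.induction_on with
  | empty => exact fun x _ hb => hbool x fun i => hb i (Finset.notMem_empty i)
  | @insert a s _ ih =>
    intro x hx hb
    have hvertex : ∀ c : 𝕜, (c = 0 ∨ c = 1) → eval (update x a c) p ∈ S := by
      intro c hc
      refine ih _ (forall_update_iff x (p := fun _ v => v ∈ Icc 0 1) |>.2 ⟨?_, fun i _ => hx i⟩)
        (forall_update_iff x (p := fun i v => i ∉ s → v = 0 ∨ v = 1) |>.2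
          ⟨fun _ => hc, fun i hia his => hb i (by simp [hia, his])⟩)
      rcases hc with rfl | rfl <;> simp
    obtain ⟨hxa0, hxa1⟩ := hx a
    rw [← update_eq_self a x, eval_update_of_degreeOf_le_one (hp a)]
    exact hS (hvertex 0 (.inl rfl)) (hvertex 1 (.inr rfl)) (sub_nonneg.2 hxa1) hxa0 (by ring)

theorem stmt9_general (n : ℕ) (p : MvPolynomial (Fin n) ℝ)
    (hp : ∀ i : Fin n, p.degreeOf i ≤ 1)
    (W : ℝ)
    (hbool : ∀ y : Fin n → ℝ, (∀ i, y i = 0 ∨ y i = 1) →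
      0 ≤ MvPolynomial.eval y p ∧ MvPolynomial.eval y p ≤ W)
    (x : Fin n → ℝ) (hx : ∀ i, 0 ≤ x i ∧ x i ≤ 1) :
    0 ≤ MvPolynomial.eval x p ∧ MvPolynomial.eval x p ≤ W :=
  eval_mem_of_forall_boolean hp (convex_Icc 0 W) hbool hx

/-- If a multilinear polynomial takes values in `[0, W]` on all
Boolean points `{0,1}^n`, then it takes values in `[0, W]` on the whole box
`[0,1]^n`. -/
theorem stmt9 (n : ℕ) (p : MvPolynomial (Fin n) ℝ)
    (hp : ∀ i : Fin n, p.degreeOf i ≤ 1)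
    (W : ℝ) (hW : 0 ≤ W)
    (hbool : ∀ y : Fin n → ℝ, (∀ i, y i = 0 ∨ y i = 1) →
      0 ≤ MvPolynomial.eval y p ∧ MvPolynomial.eval y p ≤ W)
    (x : Fin n → ℝ) (hx : ∀ i, 0 ≤ x i ∧ x i ≤ 1) :
    0 ≤ MvPolynomial.eval x p ∧ MvPolynomial.eval x p ≤ W :=
  stmt9_general n p hp W hbool x hx
end

section
/- Let V be a finite type, r ∈ V, and par : V → V a function with par(r) = r such that for every v ∈ V there exists k ∈ ℕ with par^[k](v) = r (so (V, par, r) is a rooted tree given by parent pointers, and the children of a vertex v are the vertices w ≠ r with par(w) = v). Let c : V → ℝ satisfy c(v) ≥ 0 for all v ∈ V and, for every v ∈ V, Σ_{w ∈ V, w ≠ r, par(w) = v} c(w) ≤ c(v)/2. Then Σ_{v ∈ V} c(v) ≤ 2 · c(r). -/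
/-! Summing the hypothesis over all parents counts every non-root vertex exactly once, since each
`w ≠ r` is a child of `par w` only. Hence `∑ c - c r ≤ (∑ c) / 2`, which rearranges to
`∑ c ≤ 2 * c r`. -/

theorem sum_children_eq_sum_erase {V M : Type*} [Fintype V] [DecidableEq V]
    [AddCommMonoid M] (r : V) (par : V → V) (c : V → M) :
    ∑ v : V, ∑ w ∈ Finset.univ.filter (fun w : V => w ≠ r ∧ par w = v), c w =
      ∑ w ∈ Finset.univ.erase r, c w := by
  simp_rw [← Finset.filter_ne', ← Finset.filter_filter]
  exact Finset.sum_fiberwise _ par c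

theorem sum_le_two_mul_of_sum_children_le_half {V K : Type*} [Fintype V] [DecidableEq V]
    [Field K] [LinearOrder K] [IsStrictOrderedRing K] (r : V) (par : V → V) (c : V → K)
    (hhalf : ∀ v : V,
      ∑ w ∈ Finset.univ.filter (fun w : V => w ≠ r ∧ par w = v), c w ≤ c v / 2) :
    ∑ v : V, c v ≤ 2 * c r := by
  have hnonroot : ∑ v : V, c v - c r ≤ (∑ v : V, c v) / 2 :=
    calc ∑ v : V, c v - c r
        = ∑ v : V, ∑ w ∈ Finset.univ.filter (fun w : V => w ≠ r ∧ par w = v), c w := by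
          rw [sum_children_eq_sum_erase, Finset.sum_erase_eq_sub (Finset.mem_univ r)]
      _ ≤ ∑ v : V, c v / 2 := Finset.sum_le_sum fun v _ => hhalf v
      _ = (∑ v : V, c v) / 2 := (Finset.sum_div _ _ _).symm
  linarith

theorem stmt13_general {V : Type*} [Fintype V] [DecidableEq V] (r : V) (par : V → V)
    (c : V → ℝ)
    (hhalf : ∀ v : V,
      ∑ w ∈ Finset.univ.filter (fun w : V => w ≠ r ∧ par w = v), c w ≤ c v / 2) :
    ∑ v : V, c v ≤ 2 * c r :=
  sum_le_two_mul_of_sum_children_le_half r par c hhalf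

/-- Let `(V, par, r)` be a finite rooted tree given by parent
pointers (`par r = r` and every vertex reaches `r` under iteration of `par`;
the children of `v` are the `w ≠ r` with `par w = v`).  If `c : V → ℝ` is
nonnegative and, for every `v`, the sum of `c` over the children of `v` is at
most `c v / 2`, then `Σ_v c v ≤ 2 · c r`. -/
theorem stmt13 {V : Type*} [Fintype V] [DecidableEq V] (r : V) (par : V → V)
    (hr : par r = r) (hreach : ∀ v : V, ∃ k : ℕ, par^[k] v = r)
    (c : V → ℝ) (hc0 : ∀ v, 0 ≤ c v)
    (hhalf : ∀ v : V,
      ∑ w ∈ Finset.univ.filter (fun w : V => w ≠ r ∧ par w = v), c w ≤ c v / 2) :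
    ∑ v : V, c v ≤ 2 * c r :=
  stmt13_general r par c hhalf
end
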